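/- arXiv:2205.09475 — 2 statements merged into one kernel-verified Lean document; each statement's English description precedes it below -/
import Mathlib

section
/- For all n ≥ 1, the coefficient of μ^1 in a_n(μ) equals −(n^3 + 3n^2 + 2n)/3. -/
noncomputable def p : ℕ → Polynomial ℚ
  | 0 => 1
  | 1 => 2 * (1 - Polynomial.X)
  | n + 2 => 2 * (1 - Polynomial.X) * p (n + 1) - p n

/-!
Comparing the coefficients of `μ⁰` and `μ¹` in the recurrence gives `c₀(n+2) = 2 c₀(n+1) - c₀(n)` and
`c₁(n+2) = 2 c₁(n+1) - c₁(n) - 2 c₀(n+1)`. The first forces `c₀(n) = n + 1`, so the second difference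
of `c₁` is `-2 (n + 2)`, and the cubic is the solution with the right initial values.
-/

open Polynomial

lemma p_add_two (n : ℕ) : p (n + 2) = 2 * p (n + 1) - 2 * (X * p (n + 1)) - p n := by
  rw [p]; ring

lemma coeff_zero_p_add_two (n : ℕ) :
    (p (n + 2)).coeff 0 = 2 * (p (n + 1)).coeff 0 - (p n).coeff 0 := by
  simp [p_add_two]

lemma coeff_one_p_add_two (n : ℕ) :
    (p (n + 2)).coeff 1 = 2 * (p (n + 1)).coeff 1 - 2 * (p (n + 1)).coeff 0 - (p n).coeff 1 := by
  simp [p_add_two, coeff_X_mul]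

lemma coeff_zero_p (n : ℕ) : (p n).coeff 0 = n + 1 := by
  induction n using Nat.twoStepInduction with
  | zero => simp [p, coeff_one]
  | one => norm_num [p, coeff_one]
  | more n ih₀ ih₁ =>
    rw [coeff_zero_p_add_two, ih₀, ih₁]
    push_cast
    ring

theorem stmt5_general (n : ℕ) :
    (p n).coeff 1 = -((n : ℚ) ^ 3 + 3 * (n : ℚ) ^ 2 + 2 * n) / 3 := by
  induction n using Nat.twoStepInduction with
  | zero => simp [p, coeff_one]
  | one => norm_num [p, coeff_one]
  | more n ih₀ ih₁ =>
    rw [coeff_one_p_add_two, ih₀, ih₁, coeff_zero_p]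
    push_cast
    ring

theorem stmt5 (n : ℕ) (hn : 1 ≤ n) :
    (p n).coeff 1 = -((n : ℚ) ^ 3 + 3 * (n : ℚ) ^ 2 + 2 * n) / 3 :=
  stmt5_general n
end

section
/- Let a sequence S_g satisfy S_g = (n+1)^{N_{g−1}−1} · n^{E_{g−1}−N_{g−1}+1} · S_{g−1}, where E_g = (n+1)^g E_0 and N_g = N_0 + (n−1)((n+1)^g−1)/n · E_0 (with E_0 divisible appropriately so that all exponents are natural numbers). Then for all g ≥ 1, S_g = (n+1)^{((n−1)[(n+1)^g − n·g − 1]/n^2)·E_0 + g·N_0 − g} · n^{(((n+1)^g + (n−1)n·g − 1)/n^2)·E_0 − g·N_0 + g} · S_0. -/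
/-!
Unrolling the recursion gives `S g = (n+1)^(∑_{i<g} (N i - 1)) * n^(∑_{i<g} (E i - N i + 1)) * S 0`.
Since `E i = (n+1)^i E₀` and `n N i = n N₀ + (n-1)((n+1)^i - 1) E₀`, both exponent sums are
evaluated by geometric sums; multiplied by `n²` they are the numerators of the closed form, and the
divisions are exact because `n² ∣ (n+1)^g - n g - 1` (binomial expansion).
-/

open Finset

theorem eq_pow_mul_of_succ_eq_mul {M : Type*} [Monoid M] (f : ℕ → M) (r : M)
    (h : ∀ g, f (g + 1) = r * f g) (g : ℕ) : f g = r ^ g * f 0 := by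
  induction g with
  | zero => simp
  | succ g ih => rw [h, ih, pow_succ', mul_assoc]

theorem eq_zpow_sum_mul_zpow_sum_mul {K : Type*} [Field K] {x y : K} (hx : x ≠ 0) (hy : y ≠ 0)
    (p q : ℕ → ℤ) (S : ℕ → K) (h : ∀ g, S (g + 1) = x ^ p g * y ^ q g * S g) (g : ℕ) :
    S g = x ^ (∑ i ∈ range g, p i) * y ^ (∑ i ∈ range g, q i) * S 0 := by
  induction g with
  | zero => simp
  | succ g ih =>
    rw [h, ih, sum_range_succ, sum_range_succ, zpow_add₀ hx, zpow_add₀ hy]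
    ring

section PolygonRecursion

variable {n : ℕ} {N E : ℕ → ℕ}

theorem mul_natCast_eq_of_succ_eq (hn : 1 ≤ n) (hNrec : ∀ g, N (g + 1) = N g + (n - 1) * E g)
    (hErec : ∀ g, E (g + 1) = (n + 1) * E g) (g : ℕ) :
    (n : ℤ) * N g = n * N 0 + (n - 1) * ((n + 1) ^ g - 1) * E 0 := by
  induction g with
  | zero => simp
  | succ g ih =>
    have hE : (E g : ℤ) = (n + 1) ^ g * E 0 := mod_cast eq_pow_mul_of_succ_eq_mul E _ hErec g
    rw [hNrec]
    push_cast [hn]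
    linear_combination ih + n * (n - 1) * hE

theorem sq_mul_sum_natCast_sub_one (hn : 1 ≤ n) (hNrec : ∀ g, N (g + 1) = N g + (n - 1) * E g)
    (hErec : ∀ g, E (g + 1) = (n + 1) * E g) (g : ℕ) :
    (n : ℤ) ^ 2 * ∑ i ∈ range g, ((N i : ℤ) - 1) =
      (n - 1) * ((n + 1) ^ g - n * g - 1) * E 0 + n ^ 2 * (g * N 0 - g) := by
  induction g with
  | zero => simp
  | succ g ih =>
    rw [sum_range_succ]
    push_cast
    linear_combination ih + n * mul_natCast_eq_of_succ_eq hn hNrec hErec g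

theorem sq_mul_sum_natCast_sub_add_one (hn : 1 ≤ n) (hNrec : ∀ g, N (g + 1) = N g + (n - 1) * E g)
    (hErec : ∀ g, E (g + 1) = (n + 1) * E g) (g : ℕ) :
    (n : ℤ) ^ 2 * ∑ i ∈ range g, ((E i : ℤ) - N i + 1) =
      ((n + 1) ^ g + (n - 1) * n * g - 1) * E 0 - n ^ 2 * (g * N 0 - g) := by
  induction g with
  | zero => simp
  | succ g ih =>
    have hE : (E g : ℤ) = (n + 1) ^ g * E 0 := mod_cast eq_pow_mul_of_succ_eq_mul E _ hErec g
    rw [sum_range_succ]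
    push_cast
    linear_combination ih + n ^ 2 * hE - n * mul_natCast_eq_of_succ_eq hn hNrec hErec g

end PolygonRecursion

theorem stmt19_general (n : ℕ) (hn : 2 ≤ n) (N0 E0 : ℕ)
    (N E : ℕ → ℕ)
    (hN0' : N 0 = N0) (hE0' : E 0 = E0)
    (hNrec : ∀ g, N (g + 1) = N g + (n - 1) * E g)
    (hErec : ∀ g, E (g + 1) = (n + 1) * E g)
    (S : ℕ → ℝ)
    (hSrec : ∀ g, 1 ≤ g → S g =
      ((n : ℝ) + 1) ^ ((N (g - 1) : ℤ) - 1) * (n : ℝ) ^ ((E (g - 1) : ℤ) - N (g - 1) + 1) * S (g - 1)) :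
    ∀ g, 1 ≤ g → S g =
      ((n : ℝ) + 1) ^ ((((n : ℤ) - 1) * (((n : ℤ) + 1) ^ g - n * g - 1) / n ^ 2) * E0 + g * N0 - g)
      * (n : ℝ) ^ (((((n : ℤ) + 1) ^ g + ((n : ℤ) - 1) * n * g - 1) / n ^ 2) * E0 - g * N0 + g)
      * S 0 := by
  intro g _
  subst hN0' hE0'
  have hn1 : 1 ≤ n := by omega
  have hsq : (n : ℤ) ^ 2 ≠ 0 := by positivity
  obtain ⟨k, hk⟩ : (n : ℤ) ^ 2 ∣ ((n : ℤ) + 1) ^ g - n * g - 1 := by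
    simpa [add_comm] using sq_dvd_add_pow_sub_sub (n : ℤ) 1 g
  have hk' : ((n : ℤ) + 1) ^ g + ((n : ℤ) - 1) * n * g - 1 = n ^ 2 * (k + g) := by
    linear_combination hk
  rw [hk, hk', mul_left_comm, Int.mul_ediv_cancel_left _ hsq, Int.mul_ediv_cancel_left _ hsq]
  have hA : ∑ i ∈ range g, ((N i : ℤ) - 1) = (n - 1) * k * E 0 + g * N 0 - g :=
    mul_left_cancel₀ hsq <| by
      linear_combination sq_mul_sum_natCast_sub_one hn1 hNrec hErec g + (n - 1) * E 0 * hk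
  have hB : ∑ i ∈ range g, ((E i : ℤ) - N i + 1) = (k + g) * E 0 - g * N 0 + g :=
    mul_left_cancel₀ hsq <| by
      linear_combination sq_mul_sum_natCast_sub_add_one hn1 hNrec hErec g + E 0 * hk'
  have hrec (g : ℕ) :
      S (g + 1) = ((n : ℝ) + 1) ^ ((N g : ℤ) - 1) * (n : ℝ) ^ ((E g : ℤ) - N g + 1) * S g :=
    hSrec (g + 1) (by omega)
  rw [eq_zpow_sum_mul_zpow_sum_mul (by positivity) (by positivity) _ _ S hrec g, hA, hB]

theorem stmt19 (n : ℕ) (hn : 2 ≤ n) (N0 E0 : ℕ) (hN0 : 0 < N0) (hE0 : 0 < E0)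
    (N E : ℕ → ℕ)
    (hN0' : N 0 = N0) (hE0' : E 0 = E0)
    (hNrec : ∀ g, N (g + 1) = N g + (n - 1) * E g)
    (hErec : ∀ g, E (g + 1) = (n + 1) * E g)
    (S : ℕ → ℝ)
    (hSrec : ∀ g, 1 ≤ g → S g =
      ((n : ℝ) + 1) ^ ((N (g - 1) : ℤ) - 1) * (n : ℝ) ^ ((E (g - 1) : ℤ) - N (g - 1) + 1) * S (g - 1)) :
    ∀ g, 1 ≤ g → S g =
      ((n : ℝ) + 1) ^ ((((n : ℤ) - 1) * (((n : ℤ) + 1) ^ g - n * g - 1) / n ^ 2) * E0 + g * N0 - g)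
      * (n : ℝ) ^ (((((n : ℤ) + 1) ^ g + ((n : ℤ) - 1) * n * g - 1) / n ^ 2) * E0 - g * N0 + g)
      * S 0 :=
  stmt19_general n hn N0 E0 N E hN0' hE0' hNrec hErec S hSrec
end
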